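/- arXiv:2106.13612 — 3 statements merged into one kernel-verified Lean document; each statement's English description precedes it below -/
import Mathlib

section
/- For A > 0 and 0 < k_F < 9/10, the maximizer over (F_1, F_2) of (A + b(2F_2 − F_1))^2/9 − w_2 F_1^2/2 − w_2 F_2^2/2 (the coalition excluding firm 1, with k_F = b^2/w_2, b > 0, w_2 > 0) is F_1 = −(2A k_F/b)/(9 − 10k_F) and F_2 = (4A k_F/b)/(9 − 10k_F); in particular the excluded firm's component F_1 is strictly negative. -/
/-- Coalition excluding firm 1: maximizer is F₁ = −(2A k_F/b)/(9−10k_F),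
    F₂ = (4A k_F/b)/(9−10k_F), and F₁ < 0. -/
theorem private_lobbying_coalition_excluding_firm1
    (A b w2 : ℝ) (hA : 0 < A) (hb : 0 < b) (hw : 0 < w2)
    (kF : ℝ) (hkF : kF = b^2 / w2) (hk0 : 0 < kF) (hk1 : kF < 9/10) :
    let G1 := -(2*A*kF/b)/(9 - 10*kF)
    let G2 := (4*A*kF/b)/(9 - 10*kF)
    (∀ F1 F2 : ℝ,
      (A + b*(2*F2 - F1))^2/9 - w2*F1^2/2 - w2*F2^2/2
        ≤ (A + b*(2*G2 - G1))^2/9 - w2*G1^2/2 - w2*G2^2/2) ∧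
    G1 < 0 := by
  intro G1 G2
  have hD : 0 < 9*w2 - 10*b^2 := by
    have := (div_lt_iff₀ hw).mp (hkF ▸ hk1); nlinarith
  have hDne : (9*w2 - 10*b^2) ≠ 0 := ne_of_gt hD
  have hDk : (9 : ℝ) - 10*kF = (9*w2-10*b^2)/w2 := by
    rw [hkF]; field_simp
  have hG1 : G1 = -(2*A*b)/(9*w2 - 10*b^2) := by
    show -(2*A*kF/b)/(9 - 10*kF) = _
    rw [hkF]; rw [show (9:ℝ) - 10*(b^2/w2) = (9*w2-10*b^2)/w2 by field_simp]; field_simp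
  have hG2 : G2 = (4*A*b)/(9*w2 - 10*b^2) := by
    show (4*A*kF/b)/(9 - 10*kF) = _
    rw [hkF]; rw [show (9:ℝ) - 10*(b^2/w2) = (9*w2-10*b^2)/w2 by field_simp]; field_simp
  constructor
  · intro F1 F2
    rw [hG1, hG2]
    have hval : (A + b*(2*((4*A*b)/(9*w2 - 10*b^2)) - (-(2*A*b)/(9*w2 - 10*b^2))))^2/9
        - w2*((-(2*A*b)/(9*w2 - 10*b^2)))^2/2 - w2*(((4*A*b)/(9*w2 - 10*b^2)))^2/2
        = A^2*w2/(9*w2-10*b^2) := by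
      generalize hDD : 9*w2 - 10*b^2 = D at hDne ⊢
      field_simp
      rw [← hDD]; ring
    rw [hval, le_div_iff₀ hD]
    nlinarith [sq_nonneg (2*((9*w2-10*b^2)*F1+2*A*b) + ((9*w2-10*b^2)*F2-4*A*b)),
      mul_nonneg hD.le (add_nonneg (sq_nonneg ((9*w2-10*b^2)*F1+2*A*b)) (sq_nonneg ((9*w2-10*b^2)*F2-4*A*b))),
      sq_nonneg b, mul_pos hD hD, mul_pos hw hD]
  · rw [hG1]
    apply div_neg_of_neg_of_pos _ hD
    nlinarith
end

section
/- For A > 0 and 0 < k_R < 2/9: 8 A^2 k_R/(9 − 4k_R)^2 < A^2 k_R/(2(2 − k_R)^2). That is, total lobbying transfers under duopoly with only a common component are strictly less than the merged monopolist's transfer. -/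
/-- Total common-component duopoly transfers are strictly less than the monopoly transfer. -/
theorem transfers_increase_after_merger_common
    (A kR : ℝ) (hA : 0 < A) (hk0 : 0 < kR) (hk1 : kR < 2/9) :
    8*A^2*kR/(9 - 4*kR)^2 < A^2*kR/(2*(2 - kR)^2) := by
  have h1 : (0:ℝ) < (9 - 4*kR)^2 := by nlinarith
  have h2 : (0:ℝ) < 2*(2 - kR)^2 := by nlinarith
  rw [div_lt_div_iff₀ h1 h2]
  have hA2 : 0 < A^2*kR := by positivity
  nlinarith [mul_pos hA2 hk0, sq_nonneg (9 - 4*kR)]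
end

section
/- For A > 0 and 0 < k_F < 2/9: 36 A^2 k_F (5 − 2k_F)/((9 − 2k_F)^2 (9 − 10k_F)) > A^2 k_F/(2(2 − k_F)^2). That is, total lobbying transfers with only private components are strictly larger under duopoly than after the merger to monopoly. -/
/-- Private-component duopoly transfers strictly exceed the post-merger transfer. -/
theorem transfers_decrease_after_merger_private
    (A kF : ℝ) (hA : 0 < A) (hk0 : 0 < kF) (hk1 : kF < 2/9) :
    36*A^2*kF*(5 - 2*kF)/((9 - 2*kF)^2*(9 - 10*kF)) > A^2*kF/(2*(2 - kF)^2) := by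
  have h1 : (0:ℝ) < (9 - 2*kF)^2*(9 - 10*kF) := by nlinarith [sq_nonneg (9-2*kF)]
  have h2 : (0:ℝ) < 2*(2 - kF)^2 := by nlinarith
  rw [gt_iff_lt, div_lt_div_iff₀ h2 h1]
  have hA2 : 0 < A^2 := pow_pos hA 2
  nlinarith [mul_pos hA2 hk0, mul_pos (mul_pos hA2 hk0) hk0,
    mul_pos (mul_pos (mul_pos hA2 hk0) hk0) hk0,
    mul_pos (mul_pos (mul_pos (mul_pos hA2 hk0) hk0) hk0) hk0,
    mul_pos (mul_pos hA2 hk0) (mul_pos hk0 (sub_pos.mpr hk1))]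
end
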